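/- arXiv:2006.12889 — 3 statements merged into one kernel-verified Lean document; each statement's English description precedes it below -/
import Mathlib

section
/- Every linearizable history is IVL: if a well-formed history H of a deterministic quantitative object has a linearization H' (with matching return values) such that H' ∈ 𝓗, then H is IVL with respect to 𝓗. -/
/-- An event in a history: an invocation or a response, by a process
(identified by a natural number), of an operation (identified by a unique
operation id) on an object from `X`.  Operations are updates or queries;
a response of a query carries `some r` for a return value `r : V`, or
`none` standing for the undefined value `?`. -/
inductive Ev (X V : Type) where
  | inv (proc : ℕ) (opId : ℕ) (obj : X) (isQuery : Bool) (arg : ℕ)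
  | rsp (proc : ℕ) (opId : ℕ) (obj : X) (isQuery : Bool) (ret : Option V)

namespace Ev

variable {X V : Type}

def opId : Ev X V → ℕ
  | .inv _ o _ _ _ => o
  | .rsp _ o _ _ _ => o

def proc : Ev X V → ℕ
  | .inv p _ _ _ _ => p
  | .rsp p _ _ _ _ => p

def obj : Ev X V → X
  | .inv _ _ x _ _ => x
  | .rsp _ _ x _ _ => x

def isQuery : Ev X V → Bool
  | .inv _ _ _ q _ => q
  | .rsp _ _ _ q _ => q

def isInv : Ev X V → Bool
  | .inv _ _ _ _ _ => true
  | .rsp _ _ _ _ _ => false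

def retVal : Ev X V → Option V
  | .inv _ _ _ _ _ => none
  | .rsp _ _ _ _ r => r

/-- The skeleton of an event: replace the return value of a response by `?`. -/
def skel : Ev X V → Ev X V
  | .inv p o x q a => .inv p o x q a
  | .rsp p o x q _ => .rsp p o x q none

end Ev

namespace Hist

variable {X V : Type}

/-- The skeleton `H?` of a history `H`: all return values replaced by `?`. -/
def skeleton (H : List (Ev X V)) : List (Ev X V) := H.map Ev.skel

def IsSkeleton (H : List (Ev X V)) : Prop := skeleton H = H

/-- The event at index `i` of `H` is an invocation of operation `o`. -/
def InvAt (H : List (Ev X V)) (o i : ℕ) : Prop :=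
  ∃ e, H[i]? = some e ∧ e.isInv = true ∧ e.opId = o

/-- The event at index `i` of `H` is a response of operation `o`. -/
def RspAt (H : List (Ev X V)) (o i : ℕ) : Prop :=
  ∃ e, H[i]? = some e ∧ e.isInv = false ∧ e.opId = o

def Invoked (H : List (Ev X V)) (o : ℕ) : Prop := ∃ i, InvAt H o i

def Responded (H : List (Ev X V)) (o : ℕ) : Prop := ∃ i, RspAt H o i

/-- Operation `o` is pending in `H`: it is invoked but never responds. -/
def Pending (H : List (Ev X V)) (o : ℕ) : Prop := Invoked H o ∧ ¬ Responded H o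

/-- `o1 ≺_H o2`: a response of `o1` occurs before an invocation of `o2`. -/
def Precedes (H : List (Ev X V)) (o1 o2 : ℕ) : Prop :=
  ∃ i j, i < j ∧ RspAt H o1 i ∧ InvAt H o2 j

/-- Well-formedness of a history: operation ids identify operations uniquely,
every response is preceded by a matching invocation, and no process has two
concurrent operations. -/
structure WellFormed (H : List (Ev X V)) : Prop where
  uniqueInv : ∀ o i j, InvAt H o i → InvAt H o j → i = j
  uniqueRsp : ∀ o i j, RspAt H o i → RspAt H o j → i = j
  rspMatched : ∀ j e', H[j]? = some e' → e'.isInv = false →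
    ∃ (i : ℕ) (e : Ev X V), i < j ∧ H[i]? = some e ∧ e.isInv = true ∧ e.opId = e'.opId ∧
      e.proc = e'.proc ∧ e.obj = e'.obj ∧ e.isQuery = e'.isQuery
  procSeq : ∀ i j e e', H[i]? = some e → H[j]? = some e' →
    e.isInv = true → e'.isInv = true → e.proc = e'.proc → i < j →
    ∃ k, k < j ∧ RspAt H e.opId k

/-- A sequential history alternates invocations with matching responses,
beginning with an invocation. -/
def Sequential (H : List (Ev X V)) : Prop :=
  ∀ k e, H[k]? = some e →
    (k % 2 = 0 → e.isInv = true) ∧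
    (k % 2 = 1 → e.isInv = false ∧
      ∃ e', H[k - 1]? = some e' ∧ e'.isInv = true ∧ e'.opId = e.opId ∧
        e'.proc = e.proc ∧ e'.obj = e.obj ∧ e'.isQuery = e.isQuery)

/-- Every invoked operation has a response. -/
def Complete (H : List (Ev X V)) : Prop := ∀ o, Invoked H o → Responded H o

/-- `H''` is a completion of `H`: remove the events of some pending operations
and append matching responses for (some of) the remaining pending operations. -/
def IsCompletion (H H'' : List (Ev X V)) : Prop :=
  ∃ (P : ℕ → Bool) (R : List (Ev X V)),
    (∀ o, P o = true → Pending H o) ∧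
    (∀ e ∈ R, e.isInv = false ∧ Pending H e.opId ∧ P e.opId = false ∧
      ∃ (i : ℕ) (e' : Ev X V), H[i]? = some e' ∧ e'.isInv = true ∧ e'.opId = e.opId ∧
        e'.proc = e.proc ∧ e'.obj = e.obj ∧ e'.isQuery = e.isQuery) ∧
    H'' = H.filter (fun e => !(P e.opId)) ++ R

/-- `L` is a linearization of `H`: `L` is a complete sequential history
containing the same invocations and responses as some completion of `H`,
and `L` preserves the precedence order `≺_H`. -/
def Linearization (L H : List (Ev X V)) : Prop :=
  Sequential L ∧ Complete L ∧
  (∃ H'', IsCompletion H H'' ∧ L.Perm H'') ∧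
  (∀ o1 o2, Precedes H o1 o2 → Invoked L o2 → Precedes L o1 o2)

/-- Query operation `o` returns the value `v` in `H`. -/
def QueryReturns (H : List (Ev X V)) (o : ℕ) (v : V) : Prop :=
  ∃ (i : ℕ) (e : Ev X V), H[i]? = some e ∧ e.isInv = false ∧ e.isQuery = true ∧
    e.opId = o ∧ e.retVal = some v

/-- Query operation `o` completes (has a response) in `H`. -/
def QueryCompletes (H : List (Ev X V)) (o : ℕ) : Prop :=
  ∃ (i : ℕ) (e : Ev X V), H[i]? = some e ∧ e.isInv = false ∧ e.isQuery = true ∧ e.opId = o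

/-- The return value (if any) of query `o` in `H`. -/
def retOf (H : List (Ev X V)) (o : ℕ) : Option V :=
  (H.find? (fun e => !e.isInv && e.isQuery && e.opId == o)).bind Ev.retVal

/-- `H|ₓ`: the projection of `H` onto the events on object `x`. -/
def proj [DecidableEq X] (H : List (Ev X V)) (x : X) : List (Ev X V) :=
  H.filter (fun e => decide (e.obj = x))

end Hist

/-- A deterministic quantitative sequential specification: a set of sequential
histories such that for every sequential skeleton history `S` there is exactly
one history `tau S` in the set whose skeleton is `S`; queries in specification
histories return actual (defined) values. -/
structure DetSpec (X V : Type) where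
  mem : List (Ev X V) → Prop
  mem_sequential : ∀ H, mem H → Hist.Sequential H
  tau : List (Ev X V) → List (Ev X V)
  tau_mem : ∀ S, Hist.Sequential S → Hist.IsSkeleton S → mem (tau S)
  tau_skeleton : ∀ S, Hist.Sequential S → Hist.IsSkeleton S → Hist.skeleton (tau S) = S
  tau_unique : ∀ S H, Hist.Sequential S → Hist.IsSkeleton S → mem H →
    Hist.skeleton H = S → H = tau S
  total : ∀ H, mem H → ∀ (i : ℕ) (e : Ev X V), H[i]? = some e → e.isInv = false → e.isQuery = true →
    ∃ v, e.retVal = some v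

/-- A history `H` is IVL w.r.t. specification `spec`: there are two
linearizations `H1, H2` of the skeleton `H?` such that the return value of
every query that returns in `H` is bounded between its return values in
`τ(H1)` and `τ(H2)`. -/
def IVL {X V : Type} [LinearOrder V] (H : List (Ev X V)) (spec : DetSpec X V) : Prop :=
  ∃ H1 H2 : List (Ev X V),
    Hist.IsSkeleton H1 ∧ Hist.IsSkeleton H2 ∧
    Hist.Linearization H1 (Hist.skeleton H) ∧ Hist.Linearization H2 (Hist.skeleton H) ∧
    ∀ o v, Hist.QueryReturns H o v →
      ∃ v1 v2, Hist.QueryReturns (spec.tau H1) o v1 ∧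
        Hist.QueryReturns (spec.tau H2) o v2 ∧ v1 ≤ v ∧ v ≤ v2

namespace Ev

variable {X V : Type}

@[simp] lemma skel_opId (e : Ev X V) : e.skel.opId = e.opId := by cases e <;> rfl
@[simp] lemma skel_proc (e : Ev X V) : e.skel.proc = e.proc := by cases e <;> rfl
@[simp] lemma skel_obj (e : Ev X V) : e.skel.obj = e.obj := by cases e <;> rfl
@[simp] lemma skel_isQuery (e : Ev X V) : e.skel.isQuery = e.isQuery := by cases e <;> rfl
@[simp] lemma skel_isInv (e : Ev X V) : e.skel.isInv = e.isInv := by cases e <;> rfl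
@[simp] lemma skel_skel (e : Ev X V) : e.skel.skel = e.skel := by cases e <;> rfl

end Ev

namespace Hist

variable {X V : Type}

@[simp] lemma getElem?_skeleton (H : List (Ev X V)) (i : ℕ) :
    (skeleton H)[i]? = H[i]?.map Ev.skel :=
  List.getElem?_map ..

lemma skeleton_append (A B : List (Ev X V)) :
    skeleton (A ++ B) = skeleton A ++ skeleton B :=
  List.map_append ..

lemma skeleton_filter_opId (H : List (Ev X V)) (P : ℕ → Bool) :
    skeleton (H.filter fun e => !P e.opId) = (skeleton H).filter fun e => !P e.opId := by
  simp only [skeleton, List.filter_map, Function.comp_def, Ev.skel_opId]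

lemma isSkeleton_skeleton (H : List (Ev X V)) : IsSkeleton (skeleton H) := by
  simp [IsSkeleton, skeleton, Function.comp_def]

lemma exists_getElem?_skeleton {H : List (Ev X V)} {i : ℕ} {p : Ev X V → Prop}
    (hp : ∀ e, p e.skel ↔ p e) :
    (∃ e, (skeleton H)[i]? = some e ∧ p e) ↔ ∃ e, H[i]? = some e ∧ p e := by
  simp [hp]

@[simp] lemma invAt_skeleton {H : List (Ev X V)} {o i : ℕ} :
    InvAt (skeleton H) o i ↔ InvAt H o i :=
  exists_getElem?_skeleton fun e => by simp

@[simp] lemma rspAt_skeleton {H : List (Ev X V)} {o i : ℕ} :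
    RspAt (skeleton H) o i ↔ RspAt H o i :=
  exists_getElem?_skeleton fun e => by simp

@[simp] lemma invoked_skeleton {H : List (Ev X V)} {o : ℕ} :
    Invoked (skeleton H) o ↔ Invoked H o := by
  simp [Invoked]

@[simp] lemma responded_skeleton {H : List (Ev X V)} {o : ℕ} :
    Responded (skeleton H) o ↔ Responded H o := by
  simp [Responded]

@[simp] lemma pending_skeleton {H : List (Ev X V)} {o : ℕ} :
    Pending (skeleton H) o ↔ Pending H o := by
  simp [Pending]

@[simp] lemma precedes_skeleton {H : List (Ev X V)} {o1 o2 : ℕ} :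
    Precedes (skeleton H) o1 o2 ↔ Precedes H o1 o2 := by
  simp [Precedes]

lemma Sequential.skeleton {H : List (Ev X V)} (h : Sequential H) : Sequential (skeleton H) := by
  intro k e he
  simp only [getElem?_skeleton, Option.map_eq_some_iff] at he
  obtain ⟨e, he, rfl⟩ := he
  obtain ⟨hEven, hOdd⟩ := h k e he
  refine ⟨by simpa using hEven, fun hk => ?_⟩
  obtain ⟨hRsp, e', he', hInv, hMatch⟩ := hOdd hk
  exact ⟨by simpa using hRsp, e'.skel, by simp [he'], by simpa using hInv, by simpa using hMatch⟩

lemma Complete.skeleton {H : List (Ev X V)} (h : Complete H) : Complete (skeleton H) := by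
  simpa [Complete] using h

lemma IsCompletion.skeleton {H H'' : List (Ev X V)} (h : IsCompletion H H'') :
    IsCompletion (skeleton H) (skeleton H'') := by
  obtain ⟨P, R, hP, hR, rfl⟩ := h
  refine ⟨P, Hist.skeleton R, by simpa using hP, ?_,
    by rw [skeleton_append, skeleton_filter_opId]⟩
  intro _ hR'
  obtain ⟨e, he, rfl⟩ := List.mem_map.1 hR'
  obtain ⟨hRsp, hPend, hP, i, e', he', hInv, hMatch⟩ := hR e he
  exact ⟨by simpa using hRsp, by simpa using hPend, by simpa using hP,
    i, e'.skel, by simp [he'], by simpa using hInv, by simpa using hMatch⟩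

lemma Linearization.skeleton {L H : List (Ev X V)} (h : Linearization L H) :
    Linearization (skeleton L) (skeleton H) := by
  obtain ⟨hSeq, hComp, ⟨H'', hH'', hPerm⟩, hPrec⟩ := h
  exact ⟨hSeq.skeleton, hComp.skeleton, ⟨_, hH''.skeleton, hPerm.map _⟩,
    by simpa using hPrec⟩

lemma responded_of_mem {H : List (Ev X V)} {e : Ev X V} (he : e ∈ H) (hRsp : e.isInv = false) :
    Responded H e.opId := by
  obtain ⟨i, hi, rfl⟩ := List.mem_iff_getElem.1 he
  exact ⟨i, _, List.getElem?_eq_getElem hi, hRsp, rfl⟩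

lemma IsCompletion.mem_of_mem {H H'' : List (Ev X V)} (h : IsCompletion H H'') {e : Ev X V}
    (he : e ∈ H) (hRsp : e.isInv = false) : e ∈ H'' := by
  obtain ⟨P, R, hP, -, rfl⟩ := h
  have hKept : P e.opId = false :=
    Bool.eq_false_iff.2 fun hDrop => (hP _ hDrop).2 (responded_of_mem he hRsp)
  exact List.mem_append_left _ (List.mem_filter.2 ⟨he, by simp [hKept]⟩)

lemma queryReturns_iff_exists_mem {H : List (Ev X V)} {o : ℕ} {v : V} :
    QueryReturns H o v ↔
      ∃ e ∈ H, e.isInv = false ∧ e.isQuery = true ∧ e.opId = o ∧ e.retVal = some v := by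
  simp only [QueryReturns, List.mem_iff_getElem?]
  grind

lemma Linearization.queryReturns {L H : List (Ev X V)} (h : Linearization L H) {o : ℕ} {v : V}
    (hQ : QueryReturns H o v) : QueryReturns L o v := by
  obtain ⟨-, -, ⟨H'', hH'', hPerm⟩, -⟩ := h
  obtain ⟨e, he, hRsp, hRest⟩ := queryReturns_iff_exists_mem.1 hQ
  exact queryReturns_iff_exists_mem.2 ⟨e, hPerm.mem_iff.2 (hH''.mem_of_mem he hRsp), hRsp, hRest⟩

end Hist

lemma DetSpec.tau_skeleton_of_mem {X V : Type} (spec : DetSpec X V) {H : List (Ev X V)}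
    (hH : spec.mem H) : spec.tau (Hist.skeleton H) = H :=
  (spec.tau_unique _ H (spec.mem_sequential H hH).skeleton (Hist.isSkeleton_skeleton H) hH rfl).symm

/-- The skeleton of `H'` is a linearization of `H?`, and `τ` maps it back to `H'`; taking
`H1 = H2 = H'?`, each query returns in `τ(H1)` exactly what it returns in `H`. -/
theorem linearizable_implies_ivl_general {X V : Type} [LinearOrder V]
    (H H' : List (Ev X V)) (spec : DetSpec X V)
    (hlin : Hist.Linearization H' H)
    (hmem : spec.mem H') :
    IVL H spec := by
  have hL := Hist.isSkeleton_skeleton H'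
  have hLin := hlin.skeleton
  refine ⟨_, _, hL, hL, hLin, hLin, fun o v hQ => ⟨v, v, ?_, ?_, le_rfl, le_rfl⟩⟩ <;>
    rw [spec.tau_skeleton_of_mem hmem] <;> exact hlin.queryReturns hQ

/-- **Every linearizable history is IVL**: if a well-formed history `H` of a
deterministic quantitative object has a linearization `H'` (with matching
return values) belonging to the sequential specification, then `H` is IVL
with respect to that specification. -/
theorem linearizable_implies_ivl {X V : Type} [LinearOrder V]
    (H H' : List (Ev X V)) (spec : DetSpec X V)
    (hwf : Hist.WellFormed H)
    (hlin : Hist.Linearization H' H)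
    (hmem : spec.mem H') :
    IVL H spec :=
  linearizable_implies_ivl_general H H' spec hlin hmem
end

section
/- Counter-value invariant of the binary-snapshot reduction: let n ≥ 1 and let L be any list of updates in Fin n × Bool. Then the state (s_L, S_L) reached by processing L from the initial state satisfies: there exists c : ℕ such that S_L = c * 2^n + ∑_{i : Fin n} (if s_L i then 2^i else 0). -/
/-- Processing one update `(i, b)` of the binary-snapshot reduction in state
`(s, S)`: if `s i = b` nothing happens; otherwise the local value of process
`i` becomes `b` and the batched counter is incremented by `2^i` (if `b`,
i.e. the component changes from 0 to 1) or by `2^n - 2^i` (otherwise). -/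
def snapStep (n : ℕ) : ((Fin n → Bool) × ℕ) → (Fin n × Bool) → ((Fin n → Bool) × ℕ)
  | (s, S), (i, b) =>
    if s i = b then (s, S)
    else (Function.update s i b, S + if b then 2 ^ (i : ℕ) else 2 ^ n - 2 ^ (i : ℕ))

/-- The state `(s_L, S_L)` obtained by processing the updates of `L` in order
from the initial state `(fun _ => false, 0)`. -/
def snapRun (n : ℕ) (L : List (Fin n × Bool)) : (Fin n → Bool) × ℕ :=
  L.foldl (snapStep n) (fun _ => false, 0)

/-!
Read the local values `s` as the binary digits of `snapValue s = ∑ i, [s i] 2^i`. Setting bit `i`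
raises this value by `2^i`, exactly the counter increment; clearing it lowers the value by `2^i`
while the counter grows by `2^n - 2^i`, i.e. by the same change plus one extra `2^n`. So the
counter always exceeds `snapValue s` by a multiple of `2^n`, and this invariant survives the fold.
-/

open Finset

section WeightedIndicatorSum

variable {ι M : Type*} [Fintype ι] [DecidableEq ι] [AddCommMonoid M]

theorem sum_ite_update_add (w : ι → M) (s : ι → Bool) (i : ι) (b : Bool) :
    (∑ j, if Function.update s i b j then w j else 0) + (if s i then w i else 0) =
      (∑ j, if s j then w j else 0) + (if b then w i else 0) := by
  have hrest : ∑ j ∈ univ.erase i, (if Function.update s i b j then w j else 0) =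
      ∑ j ∈ univ.erase i, (if s j then w j else 0) :=
    sum_congr rfl fun j hj => by rw [Function.update_of_ne (ne_of_mem_erase hj)]
  rw [← add_sum_erase _ _ (mem_univ i), ← add_sum_erase _ _ (mem_univ i), hrest,
    Function.update_self]
  abel

end WeightedIndicatorSum

def snapValue {n : ℕ} (s : Fin n → Bool) : ℕ :=
  ∑ i : Fin n, if s i then 2 ^ (i : ℕ) else 0

theorem snapValue_update_true {n : ℕ} {s : Fin n → Bool} {i : Fin n} (hi : s i = false) :
    snapValue (Function.update s i true) = snapValue s + 2 ^ (i : ℕ) := by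
  simpa [snapValue, hi] using sum_ite_update_add (fun j : Fin n => 2 ^ (j : ℕ)) s i true

theorem snapValue_update_false_add {n : ℕ} {s : Fin n → Bool} {i : Fin n} (hi : s i = true) :
    snapValue (Function.update s i false) + 2 ^ (i : ℕ) = snapValue s := by
  simpa [snapValue, hi] using sum_ite_update_add (fun j : Fin n => 2 ^ (j : ℕ)) s i false

def CounterInvariant (n : ℕ) (state : (Fin n → Bool) × ℕ) : Prop :=
  ∃ c : ℕ, state.2 = c * 2 ^ n + snapValue state.1

theorem counterInvariant_init (n : ℕ) : CounterInvariant n (fun _ => false, 0) :=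
  ⟨0, by simp [snapValue]⟩

theorem counterInvariant_snapStep {n : ℕ} {state : (Fin n → Bool) × ℕ}
    (h : CounterInvariant n state) (u : Fin n × Bool) :
    CounterInvariant n (snapStep n state u) := by
  obtain ⟨s, S⟩ := state
  obtain ⟨i, b⟩ := u
  obtain ⟨c, hc : S = c * 2 ^ n + snapValue s⟩ := h
  by_cases hsame : s i = b
  · simpa only [snapStep, hsame, if_true] using ⟨c, hc⟩
  simp only [snapStep, hsame, if_false]
  cases b with
  | true =>
    have hi : s i = false := by simpa using hsame
    exact ⟨c, by simp only [snapValue_update_true hi, if_true]; omega⟩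
  | false =>
    have hi : s i = true := by simpa using hsame
    have hle : 2 ^ (i : ℕ) ≤ 2 ^ n := Nat.pow_le_pow_right two_pos i.isLt.le
    have hval := snapValue_update_false_add hi
    exact ⟨c + 1, by simp only [Bool.false_eq_true, if_false]; rw [add_mul]; omega⟩

theorem counterInvariant_snapRun (n : ℕ) (L : List (Fin n × Bool)) :
    CounterInvariant n (snapRun n L) :=
  List.foldlRecOn L (snapStep n) (counterInvariant_init n) fun _ h u _ =>
    counterInvariant_snapStep h u

theorem snapshot_counter_invariant_general (n : ℕ) (L : List (Fin n × Bool)) :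
    ∃ c : ℕ, (snapRun n L).2 =
      c * 2 ^ n + ∑ i : Fin n, (if (snapRun n L).1 i then 2 ^ (i : ℕ) else 0) :=
  counterInvariant_snapRun n L

/-- **Counter-value invariant of the binary-snapshot reduction** (Invariant 1
of the paper): for any list `L` of updates, the resulting counter value `S_L`
equals `c * 2^n + ∑_{i} (if s_L i then 2^i else 0)` for some `c : ℕ`. -/
theorem snapshot_counter_invariant (n : ℕ) (hn : 1 ≤ n) (L : List (Fin n × Bool)) :
    ∃ c : ℕ, (snapRun n L).2 =
      c * 2 ^ n + ∑ i : Fin n, (if (snapRun n L).1 i then 2 ^ (i : ℕ) else 0) :=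
  snapshot_counter_invariant_general n L
end

section
/- Scan correctness of the binary-snapshot reduction: let n ≥ 1 and let L be any list of updates in Fin n × Bool, with resulting state (s_L, S_L). Then for every i : Fin n, Nat.testBit S_L i = s_L i, and s_L i equals the second component of the last pair in L whose first component is i (and equals false if no such pair exists). Consequently, a scan that reads the counter value S_L and returns its n low-order bits returns, for each process i, the parameter of the last update by process i preceding the scan, or 0 if there is none. -/
open Function

theorem Nat.testBit_eq_of_modEq_two_pow {n a b i : ℕ} (h : a ≡ b [MOD 2 ^ n]) (hi : i < n) :
    a.testBit i = b.testBit i := by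
  simpa [hi] using congrArg (Nat.testBit · i) h

theorem List.foldl_update_apply {α β : Type*} [DecidableEq α] (L : List (α × β)) (f : α → β)
    (a : α) :
    L.foldl (fun g p => update g p.1 p.2) f a =
      ((L.filter (fun p => decide (p.1 = a))).getLast?.map Prod.snd).getD (f a) := by
  induction L using List.reverseRecOn with
  | nil => rfl
  | append_singleton L p ih =>
    by_cases hp : p.1 = a
    · simp [hp]
    · simp [hp, ih, update_of_ne (Ne.symm hp)]

def bitsToNat {n : ℕ} (s : Fin n → Bool) : ℕ := ∑ j, (s j).toNat * 2 ^ (j : ℕ)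

theorem bitsToNat_eq_finFunctionFinEquiv {n : ℕ} (s : Fin n → Bool) :
    bitsToNat s = finFunctionFinEquiv (fun j => ⟨(s j).toNat, Bool.toNat_lt _⟩) :=
  rfl

theorem testBit_bitsToNat {n : ℕ} (s : Fin n → Bool) (i : Fin n) :
    (bitsToNat s).testBit i = s i := by
  rw [Nat.testBit_eq_decide_div_mod_eq, bitsToNat_eq_finFunctionFinEquiv,
    ← finFunctionFinEquiv_symm_apply_val, Equiv.symm_apply_apply]
  cases s i <;> rfl

theorem bitsToNat_update_add {n : ℕ} (s : Fin n → Bool) (i : Fin n) (b : Bool) :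
    bitsToNat (update s i b) + (s i).toNat * 2 ^ (i : ℕ) =
      bitsToNat s + b.toNat * 2 ^ (i : ℕ) := by
  have hsplit (t : Fin n → Bool) : bitsToNat t = (t i).toNat * 2 ^ (i : ℕ) +
      ∑ j ∈ Finset.univ.erase i, (t j).toNat * 2 ^ (j : ℕ) :=
    (Finset.add_sum_erase _ _ (Finset.mem_univ i)).symm
  have hrest : ∑ j ∈ Finset.univ.erase i, (update s i b j).toNat * 2 ^ (j : ℕ) =
      ∑ j ∈ Finset.univ.erase i, (s j).toNat * 2 ^ (j : ℕ) :=
    Finset.sum_congr rfl fun j hj => by rw [update_of_ne (Finset.ne_of_mem_erase hj)]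
  rw [hsplit, hsplit s, hrest, update_self]
  ring

theorem snapStep_fst (n : ℕ) (st : (Fin n → Bool) × ℕ) (p : Fin n × Bool) :
    (snapStep n st p).1 = update st.1 p.1 p.2 := by
  obtain ⟨s, S⟩ := st
  obtain ⟨i, b⟩ := p
  by_cases h : s i = b
  · subst h
    simp [snapStep]
  · simp [snapStep, h]

theorem snapRun_fst (n : ℕ) (L : List (Fin n × Bool)) :
    (snapRun n L).1 = L.foldl (fun g p => update g p.1 p.2) (fun _ => false) :=
  (List.foldl_hom Prod.fst fun st p => (snapStep_fst n st p).symm).symm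

theorem snapStep_snd_modEq (n : ℕ) (st : (Fin n → Bool) × ℕ) (p : Fin n × Bool)
    (h : st.2 ≡ bitsToNat st.1 [MOD 2 ^ n]) :
    (snapStep n st p).2 ≡ bitsToNat (snapStep n st p).1 [MOD 2 ^ n] := by
  obtain ⟨s, S⟩ := st
  obtain ⟨i, b⟩ := p
  have hupd := bitsToNat_update_add s i b
  by_cases hsb : s i = b
  · simpa [snapStep, hsb] using h
  cases b
  · rw [Bool.not_eq_false] at hsb
    have hi : 2 ^ (i : ℕ) ≤ 2 ^ n := Nat.pow_le_pow_right two_pos i.is_lt.le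
    simp only [hsb, Bool.toNat_true, Bool.toNat_false] at hupd
    simp only [snapStep, hsb, Bool.true_eq_false, Bool.false_eq_true, if_false]
    calc S + (2 ^ n - 2 ^ (i : ℕ)) ≡ bitsToNat s + (2 ^ n - 2 ^ (i : ℕ)) [MOD 2 ^ n] :=
          h.add_right _
      _ = bitsToNat (update s i false) + 2 ^ n := by omega
      _ ≡ bitsToNat (update s i false) [MOD 2 ^ n] := Nat.add_modEq_right
  · rw [Bool.not_eq_true] at hsb
    simp only [hsb, Bool.toNat_true, Bool.toNat_false] at hupd
    simp only [snapStep, hsb, Bool.false_eq_true, if_false, if_true]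
    calc S + 2 ^ (i : ℕ) ≡ bitsToNat s + 2 ^ (i : ℕ) [MOD 2 ^ n] := h.add_right _
      _ = bitsToNat (update s i true) := by omega

theorem snapRun_snd_modEq (n : ℕ) (L : List (Fin n × Bool)) :
    (snapRun n L).2 ≡ bitsToNat (snapRun n L).1 [MOD 2 ^ n] := by
  induction L using List.reverseRecOn with
  | nil => simpa [snapRun, bitsToNat] using Nat.ModEq.refl 0
  | append_singleton L p ih =>
    rw [snapRun, List.foldl_append, List.foldl_cons, List.foldl_nil]
    exact snapStep_snd_modEq n _ p ih

theorem snapshot_scan_correct_general (n : ℕ) (L : List (Fin n × Bool)) (i : Fin n) :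
    Nat.testBit (snapRun n L).2 (i : ℕ) = (snapRun n L).1 i ∧
    (snapRun n L).1 i =
      ((((L.filter (fun p => decide (p.1 = i))).getLast?).map Prod.snd).getD false) := by
  refine ⟨?_, ?_⟩
  · rw [Nat.testBit_eq_of_modEq_two_pow (snapRun_snd_modEq n L) i.is_lt, testBit_bitsToNat]
  · rw [snapRun_fst, List.foldl_update_apply]

/-- **Scan correctness of the binary-snapshot reduction** (Lemma 3 of the
paper): after processing any list `L` of updates, for every process `i`, the
`i`-th bit of the counter value `S_L` equals the local value `s_L i`, and
`s_L i` is the parameter of the last update in `L` by process `i` (or `false`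
if there is none).  Hence a scan that reads the counter and returns its `n`
low-order bits returns, for each process, the parameter of its last
preceding update, or 0 if none exists. -/
theorem snapshot_scan_correct (n : ℕ) (hn : 1 ≤ n) (L : List (Fin n × Bool)) (i : Fin n) :
    Nat.testBit (snapRun n L).2 (i : ℕ) = (snapRun n L).1 i ∧
    (snapRun n L).1 i =
      ((((L.filter (fun p => decide (p.1 = i))).getLast?).map Prod.snd).getD false) :=
  snapshot_scan_correct_general n L i
end
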